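/- Let p, q be positive integers with gcd(p,q) = 1 and 0 ≤ p/q < 1, and consider the sequence c_n = e^{2πin²p/q}. For t ∈ [0,1): (i) if t is irrational, or t = r/s is rational in lowest terms with s not dividing q, then lim_{N→∞} (1/N)·Σ_{n=1}^N e^{2πin²p/q} e^{-2πint} = 0; (ii) if t = r/s is rational in lowest terms with s dividing q, then lim_{N→∞} (1/N)·Σ_{n=1}^N e^{2πin²p/q} e^{-2πint} = (1/q)·Σ_{k=0}^{q−1} e^{2πi(k²p/q + kr/s)}. In particular, the spectrum of (c_n) (the set of t ∈ [0,1) for which this limit is nonzero) consists exactly of the rationals r/s with s | q and Σ_{k=0}^{q−1} e^{2πi(k²p/q + kr/s)} ≠ 0. -/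

import Mathlib

open Filter Finset Topology

/-- The twisted Cesàro means of the sequence `c_n = e^{2πin²p/q}` at frequency `t`. -/
noncomputable def quadCesaro (p q : ℕ) (t : ℝ) (N : ℕ) : ℂ :=
  (N : ℂ)⁻¹ * ∑ n ∈ Finset.Icc 1 N,
    Complex.exp (2 * Real.pi * Complex.I * (n : ℂ) ^ 2 * p / q) *
      Complex.exp (-(2 * Real.pi * Complex.I * n * t))

/-!
The summand `a_n = e^{2πi(n²p/q - nt)}` satisfies `a_{n+q} = z a_n` with `z = e^{-2πiqt}`, since
`(n+q)²p/q - n²p/q = 2np + qp` is an integer. Cutting `∑_{n<N} a_n` into blocks of length `q`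
gives `(1 + z + ⋯ + z^{m-1})` times one block sum, plus a bounded tail. If `qt ∉ ℤ`, then
`z ≠ 1` lies on the unit circle, the geometric sums stay bounded and the Cesàro means tend to `0`.
If `qt ∈ ℤ`, the summand is `q`-periodic and the Cesàro means tend to its mean over a period.
For `t = r/s` in lowest terms, `qt ∈ ℤ` exactly when `s ∣ q`, and reflecting `n ↦ -n` in the
period turns the mean into the stated Gauss-type sum.
-/

section Cesaro

variable {𝕜 : Type*} [RCLike 𝕜] {f : ℕ → 𝕜} {q : ℕ} {z : 𝕜}

theorem norm_geom_sum_le_two_div (hz : ‖z‖ ≤ 1) (hz1 : z ≠ 1) (m : ℕ) :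
    ‖∑ j ∈ range m, z ^ j‖ ≤ 2 / ‖z - 1‖ := by
  rw [geom_sum_eq hz1, norm_div]
  gcongr
  calc ‖z ^ m - 1‖ ≤ ‖z‖ ^ m + ‖(1 : 𝕜)‖ := by rw [← norm_pow]; exact norm_sub_le _ _
    _ ≤ 2 := by rw [norm_one]; linarith [pow_le_one₀ (norm_nonneg z) hz (n := m)]

theorem tendsto_cesaro_zero_of_norm_sum_le {C : ℝ}
    (hC : ∀ N, ‖∑ n ∈ range N, f n‖ ≤ C) :
    Tendsto (fun N : ℕ ↦ (N : 𝕜)⁻¹ * ∑ n ∈ range N, f n) atTop (𝓝 0) :=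
  tendsto_inv_atTop_nhds_zero_nat.zero_mul_isBoundedUnder_le (isBoundedUnder_of ⟨C, hC⟩)

theorem apply_mul_add_eq_pow_mul (hf : ∀ n, f (n + q) = z * f n) (m n : ℕ) :
    f (m * q + n) = z ^ m * f n := by
  induction m with
  | zero => simp
  | succ m ih =>
    rw [add_mul, one_mul, add_right_comm, hf, ih, pow_succ]
    ring

theorem sum_range_mul_eq_geom_sum_mul (hf : ∀ n, f (n + q) = z * f n) (m : ℕ) :
    ∑ n ∈ range (m * q), f n = (∑ j ∈ range m, z ^ j) * ∑ n ∈ range q, f n := by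
  induction m with
  | zero => simp
  | succ m ih =>
    simp only [add_mul, one_mul, sum_range_add, ih, apply_mul_add_eq_pow_mul hf, ← mul_sum,
      sum_range_succ]

theorem norm_sum_range_le_geom_sum (hq : 0 < q) (hf : ∀ n, f (n + q) = z * f n) {C : ℝ}
    (hC : ∀ n, ‖f n‖ ≤ C) (N : ℕ) :
    ‖∑ n ∈ range N, f n‖ ≤ ‖∑ j ∈ range (N / q), z ^ j‖ * ‖∑ n ∈ range q, f n‖ + q * C := by
  have hC0 : 0 ≤ C := (norm_nonneg _).trans (hC 0)
  have htail : ‖∑ n ∈ range (N % q), f (N / q * q + n)‖ ≤ q * C := calc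
    _ ≤ ∑ n ∈ range (N % q), ‖f (N / q * q + n)‖ := norm_sum_le _ _
    _ ≤ ((N % q : ℕ) : ℝ) * C := by
      simpa using sum_le_sum (s := range (N % q)) fun n _ ↦ hC (N / q * q + n)
    _ ≤ q * C := by gcongr; exact (Nat.mod_lt N hq).le
  conv_lhs => rw [← Nat.div_add_mod' N q, sum_range_add, sum_range_mul_eq_geom_sum_mul hf]
  exact (norm_add_le _ _).trans (by rw [norm_mul]; gcongr)

theorem tendsto_cesaro_zero_of_apply_add_eq_mul (hq : 0 < q) (hf : ∀ n, f (n + q) = z * f n) {C : ℝ}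
    (hC : ∀ n, ‖f n‖ ≤ C) (hz : ‖z‖ ≤ 1) (hz1 : z ≠ 1) :
    Tendsto (fun N : ℕ ↦ (N : 𝕜)⁻¹ * ∑ n ∈ range N, f n) atTop (𝓝 0) :=
  tendsto_cesaro_zero_of_norm_sum_le (C := 2 / ‖z - 1‖ * ‖∑ n ∈ range q, f n‖ + q * C)
    fun N ↦ (norm_sum_range_le_geom_sum hq hf hC N).trans
      (by gcongr; exact norm_geom_sum_le_two_div hz hz1 _)

theorem Function.Periodic.tendsto_cesaro (hf : Function.Periodic f q) (hq : 0 < q) {C : ℝ}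
    (hC : ∀ n, ‖f n‖ ≤ C) :
    Tendsto (fun N : ℕ ↦ (N : 𝕜)⁻¹ * ∑ n ∈ range N, f n) atTop
      (𝓝 ((q : 𝕜)⁻¹ * ∑ n ∈ range q, f n)) := by
  set c := (q : 𝕜)⁻¹ * ∑ n ∈ range q, f n with hc
  -- subtracting the mean leaves a periodic sequence with vanishing block sums
  have hg : ∀ n, (f (n + q) - c) = 1 * (f n - c) := fun n ↦ by rw [hf, one_mul]
  have hg0 : ∑ n ∈ range q, (f n - c) = 0 := by
    rw [sum_sub_distrib, sum_const, card_range, nsmul_eq_mul, hc,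
      mul_inv_cancel_left₀ (Nat.cast_ne_zero.2 hq.ne'), sub_self]
  have hsums : ∀ N, ‖∑ n ∈ range N, (f n - c)‖ ≤ q * (C + ‖c‖) := fun N ↦ by
    simpa [hg0] using norm_sum_range_le_geom_sum hq hg (C := C + ‖c‖)
      (fun n ↦ (norm_sub_le (f n) c).trans (by linarith [hC n])) N
  rw [← tendsto_sub_nhds_zero_iff]
  refine (tendsto_cesaro_zero_of_norm_sum_le hsums).congr' ?_
  filter_upwards [eventually_ne_atTop 0] with N hN
  rw [sum_sub_distrib, sum_const, card_range, nsmul_eq_mul, mul_sub]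
  field_simp

end Cesaro

theorem Function.Periodic.sum_range_neg {M : Type*} [AddCommMonoid M] {h : ℤ → M} {q : ℕ}
    (hh : Function.Periodic h q) : ∑ k ∈ range q, h (-k) = ∑ k ∈ range q, h (k + 1) := by
  rw [← sum_range_reflect]
  refine sum_congr rfl fun k hk ↦ ?_
  have hk : k < q := mem_range.1 hk
  rw [← hh, show -((q - 1 - k : ℕ) : ℤ) + q = k + 1 by omega]

theorem Int.exists_mul_div_eq_iff_dvd {r s : ℤ} (hs : 0 < s) (hrs : IsCoprime r s) (a : ℤ) :
    (∃ k : ℤ, (a : ℝ) * (r / s) = k) ↔ s ∣ a := by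
  have hs' : (s : ℝ) ≠ 0 := by exact_mod_cast hs.ne'
  constructor
  · rintro ⟨k, hk⟩
    refine hrs.symm.dvd_of_dvd_mul_right ⟨k, ?_⟩
    rw [mul_div_assoc', div_eq_iff hs'] at hk
    exact_mod_cast hk.trans (mul_comm _ _)
  · rintro ⟨c, rfl⟩
    exact ⟨c * r, by push_cast; field_simp⟩

theorem exists_isCoprime_eq_div_of_not_irrational {t : ℝ} (ht : ¬Irrational t) :
    ∃ r s : ℤ, 0 < s ∧ IsCoprime r s ∧ t = r / s := by
  obtain ⟨x, rfl⟩ := not_not.1 ht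
  exact ⟨x.num, x.den, by exact_mod_cast x.pos, x.isCoprime_num_den, by simp [Rat.cast_def]⟩

/-- The summand of `quadCesaro`, indexed by `ℤ` so that a period can be reflected through `0`. -/
noncomputable def quadPhase (p q : ℕ) (t : ℝ) (n : ℤ) : ℂ :=
  Complex.exp (2 * Real.pi * Complex.I * (n : ℂ) ^ 2 * p / q) *
    Complex.exp (-(2 * Real.pi * Complex.I * n * t))

section QuadPhase

variable {p q : ℕ} {t : ℝ}

theorem quadCesaro_eq_sum_range_quadPhase (N : ℕ) :
    quadCesaro p q t N = (N : ℂ)⁻¹ * ∑ n ∈ range N, quadPhase p q t (n + 1) := by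
  rw [quadCesaro, ← Ico_add_one_right_eq_Icc, sum_Ico_eq_sum_range, Nat.add_sub_cancel]
  simp [quadPhase, add_comm]

theorem norm_quadPhase (n : ℤ) : ‖quadPhase p q t n‖ = 1 := by
  simp [quadPhase, Complex.norm_exp, sq]

theorem quadPhase_add (hq : q ≠ 0) (n : ℤ) :
    quadPhase p q t (n + q) =
      Complex.exp (-(2 * Real.pi * Complex.I * q * t)) * quadPhase p q t n := by
  have hquad : Complex.exp (2 * Real.pi * Complex.I * ((n + q : ℤ) : ℂ) ^ 2 * p / q)
      = Complex.exp (2 * Real.pi * Complex.I * (n : ℂ) ^ 2 * p / q) :=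
    Complex.exp_eq_exp_iff_exists_int.2 ⟨2 * n * p + q * p, by push_cast; field_simp; ring⟩
  rw [quadPhase, quadPhase, hquad]
  simp only [← Complex.exp_add]
  congr 1
  push_cast
  ring

theorem tendsto_quadCesaro_zero (hq : 0 < q) (ht : ∀ k : ℤ, (q : ℝ) * t ≠ k) :
    Tendsto (quadCesaro p q t) atTop (𝓝 0) := by
  have hz : ‖Complex.exp (-(2 * Real.pi * Complex.I * q * t))‖ = 1 := by
    simp [Complex.norm_exp]
  have hz1 : Complex.exp (-(2 * Real.pi * Complex.I * q * t)) ≠ 1 := by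
    rw [Ne, Complex.exp_eq_one_iff]
    rintro ⟨k, hk⟩
    have h2π : (2 * Real.pi * Complex.I : ℂ) ≠ 0 := by simp [Real.pi_ne_zero]
    have hqt : ((q * t : ℝ) : ℂ) = ((-k : ℤ) : ℂ) :=
      mul_right_cancel₀ h2π (by push_cast; linear_combination -hk)
    exact ht (-k) (by exact_mod_cast hqt)
  rw [funext quadCesaro_eq_sum_range_quadPhase]
  refine tendsto_cesaro_zero_of_apply_add_eq_mul hq (fun n ↦ ?_) (fun n ↦ (norm_quadPhase _).le)
    hz.le hz1
  push_cast
  rw [add_right_comm, quadPhase_add hq.ne']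

theorem tendsto_quadCesaro_of_mul_eq_int (hq : 0 < q) {k : ℤ} (hk : (q : ℝ) * t = k) :
    Tendsto (quadCesaro p q t) atTop
      (𝓝 ((q : ℂ)⁻¹ * ∑ n ∈ range q, quadPhase p q t (-n))) := by
  have hkC : (q : ℂ) * t = k := by exact_mod_cast congrArg Complex.ofReal hk
  have hz : Complex.exp (-(2 * Real.pi * Complex.I * q * t)) = 1 :=
    Complex.exp_eq_one_iff.2
      ⟨-k, by push_cast; linear_combination (-(2 * Real.pi * Complex.I)) * hkC⟩
  have hper : Function.Periodic (quadPhase p q t) q := fun n ↦ by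
    rw [quadPhase_add hq.ne', hz, one_mul]
  rw [hper.sum_range_neg, funext quadCesaro_eq_sum_range_quadPhase]
  exact Function.Periodic.tendsto_cesaro (fun n ↦ by push_cast; rw [add_right_comm, hper]) hq
    (fun n ↦ (norm_quadPhase _).le)

theorem quadPhase_div_neg (r s : ℤ) (k : ℕ) :
    quadPhase p q (r / s) (-k) =
      Complex.exp (2 * Real.pi * Complex.I * ((k : ℂ) ^ 2 * p / q + (k : ℂ) * r / s)) := by
  rw [quadPhase, ← Complex.exp_add]
  congr 1
  push_cast
  ring

end QuadPhase

theorem quadratic_rational_spectrum_general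
    (p q : ℕ) (hq : 0 < q) :
    (∀ t : ℝ, 0 ≤ t → t < 1 → Irrational t →
      Filter.Tendsto (quadCesaro p q t) Filter.atTop (nhds 0)) ∧
    (∀ r s : ℤ, 0 < s → IsCoprime r s → ¬ (s ∣ (q : ℤ)) →
      0 ≤ (r : ℝ) / s → (r : ℝ) / s < 1 →
      Filter.Tendsto (quadCesaro p q ((r : ℝ) / s)) Filter.atTop (nhds 0)) ∧
    (∀ r s : ℤ, 0 < s → IsCoprime r s → (s ∣ (q : ℤ)) →
      0 ≤ (r : ℝ) / s → (r : ℝ) / s < 1 →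
      Filter.Tendsto (quadCesaro p q ((r : ℝ) / s)) Filter.atTop
        (nhds ((q : ℂ)⁻¹ * ∑ k ∈ Finset.range q,
          Complex.exp (2 * Real.pi * Complex.I *
            ((k : ℂ) ^ 2 * p / q + (k : ℂ) * r / s))))) ∧
    ({t : ℝ | 0 ≤ t ∧ t < 1 ∧ ¬ Filter.Tendsto (quadCesaro p q t) Filter.atTop (nhds 0)} =
      {t : ℝ | 0 ≤ t ∧ t < 1 ∧ ∃ r s : ℤ, 0 < s ∧ IsCoprime r s ∧ t = (r : ℝ) / s ∧
        (s ∣ (q : ℤ)) ∧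
        (∑ k ∈ Finset.range q,
          Complex.exp (2 * Real.pi * Complex.I *
            ((k : ℂ) ^ 2 * p / q + (k : ℂ) * r / s))) ≠ 0}) := by
  have irrational (t : ℝ) (ht : Irrational t) : Tendsto (quadCesaro p q t) atTop (𝓝 0) :=
    tendsto_quadCesaro_zero hq fun k ↦ (ht.natCast_mul hq.ne').ne_int k
  have not_dvd (r s : ℤ) (hs : 0 < s) (hrs : IsCoprime r s) (hsq : ¬s ∣ q) :
      Tendsto (quadCesaro p q (r / s)) atTop (𝓝 0) :=
    tendsto_quadCesaro_zero hq fun k hk ↦ hsq ((Int.exists_mul_div_eq_iff_dvd hs hrs q).1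
      ⟨k, by exact_mod_cast hk⟩)
  have dvd (r s : ℤ) (hs : 0 < s) (hrs : IsCoprime r s) (hsq : s ∣ q) :
      Tendsto (quadCesaro p q (r / s)) atTop (𝓝 ((q : ℂ)⁻¹ * ∑ k ∈ range q,
        Complex.exp (2 * Real.pi * Complex.I * ((k : ℂ) ^ 2 * p / q + (k : ℂ) * r / s)))) := by
    obtain ⟨k, hk⟩ := (Int.exists_mul_div_eq_iff_dvd hs hrs q).2 hsq
    simpa only [quadPhase_div_neg] using
      tendsto_quadCesaro_of_mul_eq_int hq (t := r / s) (by exact_mod_cast hk)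
  refine ⟨fun t _ _ ↦ irrational t, fun r s hs hrs hsq _ _ ↦ not_dvd r s hs hrs hsq,
    fun r s hs hrs hsq _ _ ↦ dvd r s hs hrs hsq, Set.ext fun t ↦ ⟨?_, ?_⟩⟩
  · rintro ⟨ht0, ht1, hlim⟩
    obtain ⟨r, s, hs, hrs, rfl⟩ :=
      exists_isCoprime_eq_div_of_not_irrational (mt (irrational t) hlim)
    have hsq : s ∣ q := by_contra fun hsq ↦ hlim (not_dvd r s hs hrs hsq)
    refine ⟨ht0, ht1, r, s, hs, hrs, rfl, hsq, fun hsum ↦ hlim ?_⟩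
    simpa [hsum] using dvd r s hs hrs hsq
  · rintro ⟨ht0, ht1, r, s, hs, hrs, rfl, hsq, hsum⟩
    refine ⟨ht0, ht1, fun hlim ↦ hsum ?_⟩
    simpa [hq.ne'] using (tendsto_nhds_unique hlim (dvd r s hs hrs hsq)).symm

/-- For `c_n = e^{2πin²p/q}` with `gcd(p,q)=1`, `0 ≤ p/q < 1`:
(i) the Cesàro means at irrational `t`, and at rationals `r/s` in lowest terms with `s ∤ q`,
tend to `0`; (ii) at rationals `r/s` in lowest terms with `s ∣ q` they tend to
`(1/q)·∑_{k<q} e^{2πi(k²p/q+kr/s)}`; and the spectrum consists exactly of the rationals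
`r/s` with `s ∣ q` and nonvanishing Gauss-type sum. -/
theorem quadratic_rational_spectrum
    (p q : ℕ) (hq : 0 < q) (hpq : Nat.Coprime p q) (hpltq : p < q) :
    (∀ t : ℝ, 0 ≤ t → t < 1 → Irrational t →
      Filter.Tendsto (quadCesaro p q t) Filter.atTop (nhds 0)) ∧
    (∀ r s : ℤ, 0 < s → IsCoprime r s → ¬ (s ∣ (q : ℤ)) →
      0 ≤ (r : ℝ) / s → (r : ℝ) / s < 1 →
      Filter.Tendsto (quadCesaro p q ((r : ℝ) / s)) Filter.atTop (nhds 0)) ∧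
    (∀ r s : ℤ, 0 < s → IsCoprime r s → (s ∣ (q : ℤ)) →
      0 ≤ (r : ℝ) / s → (r : ℝ) / s < 1 →
      Filter.Tendsto (quadCesaro p q ((r : ℝ) / s)) Filter.atTop
        (nhds ((q : ℂ)⁻¹ * ∑ k ∈ Finset.range q,
          Complex.exp (2 * Real.pi * Complex.I *
            ((k : ℂ) ^ 2 * p / q + (k : ℂ) * r / s))))) ∧
    ({t : ℝ | 0 ≤ t ∧ t < 1 ∧ ¬ Filter.Tendsto (quadCesaro p q t) Filter.atTop (nhds 0)} =
      {t : ℝ | 0 ≤ t ∧ t < 1 ∧ ∃ r s : ℤ, 0 < s ∧ IsCoprime r s ∧ t = (r : ℝ) / s ∧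
        (s ∣ (q : ℤ)) ∧
        (∑ k ∈ Finset.range q,
          Complex.exp (2 * Real.pi * Complex.I *
            ((k : ℂ) ^ 2 * p / q + (k : ℂ) * r / s))) ≠ 0}) :=
  quadratic_rational_spectrum_general p q hq
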